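/- arXiv:math/0011239 — 2 statements merged into one kernel-verified Lean document; each statement's English description precedes it below -/
import Mathlib

section
/- Let n ≥ 1 and B ≥ 2 be integers. The function E : Δ_n → ℝ is concave: for all x, y ∈ Δ_n and all t ∈ [0,1], E(t x + (1−t) y) ≥ t E(x) + (1−t) E(y). -/
/-! For a fixed exponent vector `m`, the map `x ↦ ∑ m j * x j` is linear, and the constraint on `m`
only sees the support of `x`. If `m` is admissible for `z = t • x + (1 - t) • y`, it is admissible for
`x` when `t > 0` and for `y` when `t < 1`, since their supports lie in that of `z`; hence
`t * E x + (1 - t) * E y ≤ ∑ m j * z j`, and taking the infimum over `m` gives concavity. -/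

open Finset

/-- The extremal function
`E(x) = min{ Σ m(j) x(j) : m(j) ∈ ℕ, Σ sgn(x(j)) B^{-m(j)} ≤ 1 }`. -/
noncomputable def Efun (n B : ℕ) (x : Fin (n + 1) → ℝ) : ℝ :=
  sInf { s : ℝ | ∃ m : Fin (n + 1) → ℕ,
    (∑ j, Real.sign (x j) * ((B : ℝ) ^ (m j))⁻¹) ≤ 1 ∧
    s = ∑ j, (m j : ℝ) * x j }

theorem Real.sign_monotone : Monotone Real.sign := by
  intro a b hab
  unfold Real.sign
  split_ifs <;> linarith

theorem Real.sign_mul_of_pos {c : ℝ} (hc : 0 < c) (a : ℝ) : Real.sign (c * a) = Real.sign a := by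
  rcases lt_trichotomy a 0 with ha | rfl | ha
  · rw [Real.sign_of_neg (mul_neg_of_pos_of_neg hc ha), Real.sign_of_neg ha]
  · rw [mul_zero]
  · rw [Real.sign_of_pos (mul_pos hc ha), Real.sign_of_pos ha]

theorem Real.sign_le_one (a : ℝ) : Real.sign a ≤ 1 :=
  (Real.sign_monotone (le_max_left a 1)).trans (Real.sign_of_pos (by positivity)).le

def Admissible {ι : Type*} [Fintype ι] (B : ℕ) (x : ι → ℝ) (m : ι → ℕ) : Prop :=
  ∑ j, Real.sign (x j) * ((B : ℝ) ^ m j)⁻¹ ≤ 1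

namespace Admissible

variable {ι : Type*} [Fintype ι] {B : ℕ}

theorem mono {x z : ι → ℝ} {m : ι → ℕ} (hz : Admissible B z m)
    (hxz : ∀ j, Real.sign (x j) ≤ Real.sign (z j)) : Admissible B x m :=
  (sum_le_sum fun j _ => mul_le_mul_of_nonneg_right (hxz j) (by positivity)).trans hz

theorem of_smul_add {x s : ι → ℝ} {m : ι → ℕ} {t : ℝ} (ht : 0 < t) (hs : 0 ≤ s)
    (h : Admissible B (t • x + s) m) : Admissible B x m :=
  h.mono fun j => by
    rw [← Real.sign_mul_of_pos ht (x j)]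
    exact Real.sign_monotone (le_add_of_nonneg_right (hs j))

theorem const_card (hB : 2 ≤ B) (x : ι → ℝ) :
    Admissible B x fun _ => Fintype.card ι := by
  set k := Fintype.card ι
  have hBk : (k : ℝ) ≤ (B : ℝ) ^ k := by
    calc (k : ℝ) ≤ 2 ^ k := by exact_mod_cast (Nat.lt_two_pow_self).le
      _ ≤ (B : ℝ) ^ k := pow_le_pow_left₀ zero_le_two (by exact_mod_cast hB) k
  calc ∑ j, Real.sign (x j) * ((B : ℝ) ^ k)⁻¹
      ≤ ∑ _j : ι, 1 * ((B : ℝ) ^ k)⁻¹ :=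
        sum_le_sum fun j _ =>
          mul_le_mul_of_nonneg_right (Real.sign_le_one (x j)) (by positivity)
    _ = k / (B : ℝ) ^ k := by simp [k, div_eq_mul_inv]
    _ ≤ 1 := div_le_one_of_le₀ hBk (by positivity)

end Admissible

section Efun

variable {n B : ℕ} {x : Fin (n + 1) → ℝ}

theorem Efun_le_of_admissible (hx : 0 ≤ x) {m : Fin (n + 1) → ℕ} (hm : Admissible B x m) :
    Efun n B x ≤ ∑ j, (m j : ℝ) * x j := by
  refine csInf_le ⟨0, ?_⟩ ⟨m, hm, rfl⟩
  rintro s ⟨m', -, rfl⟩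
  exact sum_nonneg fun j _ => mul_nonneg (Nat.cast_nonneg _) (hx j)

theorem le_Efun_of_forall_admissible (hB : 2 ≤ B) {c : ℝ}
    (h : ∀ m, Admissible B x m → c ≤ ∑ j, (m j : ℝ) * x j) : c ≤ Efun n B x := by
  refine le_csInf ⟨_, _, Admissible.const_card hB x, rfl⟩ ?_
  rintro s ⟨m, hm, rfl⟩
  exact h m hm

theorem mul_Efun_le_of_admissible_smul_add {t : ℝ} (ht : 0 ≤ t) (hx : 0 ≤ x)
    {s : Fin (n + 1) → ℝ} (hs : 0 ≤ s) {m : Fin (n + 1) → ℕ}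
    (hm : Admissible B (t • x + s) m) : t * Efun n B x ≤ t * ∑ j, (m j : ℝ) * x j := by
  rcases ht.eq_or_lt with rfl | ht
  · simp
  · exact mul_le_mul_of_nonneg_left (Efun_le_of_admissible hx (hm.of_smul_add ht hs)) ht.le

end Efun

theorem stmt7_general (n B : ℕ) (hB : 2 ≤ B) :
    ∀ x ∈ stdSimplex ℝ (Fin (n + 1)), ∀ y ∈ stdSimplex ℝ (Fin (n + 1)),
      ∀ t : ℝ, 0 ≤ t → t ≤ 1 →
        t * Efun n B x + (1 - t) * Efun n B y ≤ Efun n B (t • x + (1 - t) • y) := by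
  intro x hx y hy t ht0 ht1
  have hx0 : 0 ≤ x := hx.1
  have hy0 : 0 ≤ y := hy.1
  have ht1' : 0 ≤ 1 - t := sub_nonneg.mpr ht1
  have htx : 0 ≤ t • x := smul_nonneg ht0 hx0
  have hty : 0 ≤ (1 - t) • y := smul_nonneg ht1' hy0
  refine le_Efun_of_forall_admissible hB fun m hm => ?_
  have hxm := mul_Efun_le_of_admissible_smul_add ht0 hx0 hty hm
  have hym := mul_Efun_le_of_admissible_smul_add ht1' hy0 htx (add_comm (t • x) _ ▸ hm)
  have hsplit : ∑ j, (m j : ℝ) * (t • x + (1 - t) • y) j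
      = t * ∑ j, (m j : ℝ) * x j + (1 - t) * ∑ j, (m j : ℝ) * y j := by
    simp only [Pi.add_apply, Pi.smul_apply, smul_eq_mul, mul_sum, ← sum_add_distrib]
    exact sum_congr rfl fun j _ => by ring
  linarith

theorem stmt7 (n B : ℕ) (hn : 1 ≤ n) (hB : 2 ≤ B) :
    ∀ x ∈ stdSimplex ℝ (Fin (n + 1)), ∀ y ∈ stdSimplex ℝ (Fin (n + 1)),
      ∀ t : ℝ, 0 ≤ t → t ≤ 1 →
        t * Efun n B x + (1 - t) * Efun n B y ≤ Efun n B (t • x + (1 - t) • y) :=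
  stmt7_general n B hB
end

section
/- Let n ≥ 1 be an integer. The constant κ(n) = ⌊log_2 n⌋ + 2(n + 1 − 2^{⌊log_2 n⌋})/(n + 1) in the Hyers–Ulam stability theorem for ε-convex functions is best possible: there exists a 1-convex function f on the convex set Δ_n ⊆ ℝ^{n+1} such that for every convex function g : Δ_n → ℝ with g(x) ≤ f(x) for all x ∈ Δ_n, one has sup_{x∈Δ_n} (f(x) − g(x)) ≥ κ(n). -/
/-!
The extremal function is the optimal expected length of a binary prefix code for the
distribution `x`, where by Kraft's inequality codeword lengths `d` are admissible iff
`∑ 2^(-d j) ≤ 1` over the support of `x`. Merging optimal codes for `x` and `y` under one extra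
leading bit gives a code for any mixture, so this function is 1-convex. It vanishes at the
vertices, so by the maximum principle every convex minorant is `≤ 0` on the simplex, while at the
barycenter the tangent-line bound `M + 2 ≤ d + 2^(M+1-d)`, summed against Kraft's inequality with
`M = ⌊log₂ n⌋`, shows that the optimal code length is at least `κ(n)`.
-/

open Finset

/-- `κ(n) = ⌊log_2 n⌋ + 2(n+1-2^⌊log_2 n⌋)/(n+1)`. -/
noncomputable def kappa2 (n : ℕ) : ℝ :=
  (⌊Real.logb 2 n⌋ : ℝ) +
    2 * ((n : ℝ) + 1 - (2 : ℝ) ^ (⌊Real.logb 2 n⌋ : ℤ)) / ((n : ℝ) + 1)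

lemma add_two_le_add_two_pow_mul_inv_two_pow (M d : ℕ) :
    (M : ℝ) + 2 ≤ d + 2 ^ (M + 1) * 2⁻¹ ^ d := by
  rcases le_or_gt d (M + 1) with h | h
  · obtain ⟨k, hk⟩ := Nat.exists_eq_add_of_le h
    have hk' : (M : ℝ) + 1 = d + k := by exact_mod_cast hk
    have hpow : (k : ℝ) + 1 ≤ 2 ^ k := by exact_mod_cast Nat.lt_two_pow_self
    rw [hk, pow_add, mul_right_comm, ← mul_pow, mul_inv_cancel₀ two_ne_zero, one_pow, one_mul]
    linarith
  · have hd : (M : ℝ) + 2 ≤ d := by exact_mod_cast h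
    have : (0 : ℝ) ≤ 2 ^ (M + 1) * 2⁻¹ ^ d := by positivity
    linarith

lemma exists_codeword_length_mix {a b t : ℝ} (ha : 0 ≤ a) (hb : 0 ≤ b) (ht₀ : 0 ≤ t)
    (ht₁ : t ≤ 1) (k l : ℕ) :
    ∃ m : ℕ,
      (if t * a + (1 - t) * b = 0 then 0 else (2⁻¹ : ℝ) ^ m) ≤
        ((if a = 0 then 0 else (2⁻¹ : ℝ) ^ k) +
          (if b = 0 then 0 else (2⁻¹ : ℝ) ^ l)) / 2 ∧
      (t * a + (1 - t) * b) * m ≤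
        t * a + (1 - t) * b + (t * (a * k) + (1 - t) * (b * l)) := by
  set A : ℝ := if a = 0 then 0 else 2⁻¹ ^ k
  set B : ℝ := if b = 0 then 0 else 2⁻¹ ^ l
  suffices ∃ m : ℕ, (t * a + (1 - t) * b ≠ 0 → (2⁻¹ : ℝ) ^ m ≤ A + B) ∧
      (t * a + (1 - t) * b) * m ≤ t * (a * k) + (1 - t) * (b * l) by
    obtain ⟨m, hkraft, hlen⟩ := this
    refine ⟨m + 1, ?_, by push_cast; linarith⟩
    by_cases hw : t * a + (1 - t) * b = 0
    · have hA : 0 ≤ A := by positivity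
      have hB : 0 ≤ B := by positivity
      rw [if_pos hw]; positivity
    · rw [if_neg hw, pow_succ]; linarith [hkraft hw]
  have h1t : 0 ≤ 1 - t := by linarith
  rcases eq_or_ne a 0 with rfl | ha0
  · refine ⟨l, fun hw => ?_, by simp [mul_assoc]⟩
    have hb0 : b ≠ 0 := by rintro rfl; simp at hw
    simp [A, B, hb0]
  rcases eq_or_ne b 0 with rfl | hb0
  · exact ⟨k, fun _ => by simp [A, B, ha0], by simp [mul_assoc]⟩
  refine ⟨min k l, fun _ => ?_, ?_⟩
  · simp only [A, B, ha0, hb0, if_false]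
    rcases le_total k l with h | h
    · rw [min_eq_left h]; linarith [pow_nonneg (by norm_num : (0 : ℝ) ≤ 2⁻¹) l]
    · rw [min_eq_right h]; linarith [pow_nonneg (by norm_num : (0 : ℝ) ≤ 2⁻¹) k]
  · have hk : ((min k l : ℕ) : ℝ) ≤ k := by exact_mod_cast min_le_left k l
    have hl : ((min k l : ℕ) : ℝ) ≤ l := by exact_mod_cast min_le_right k l
    have := mul_le_mul_of_nonneg_left hk (mul_nonneg ht₀ ha)
    have := mul_le_mul_of_nonneg_left hl (mul_nonneg h1t hb)
    linarith

lemma kappa2_eq (n : ℕ) :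
    kappa2 n = Nat.log 2 n + 2 - 2 ^ (Nat.log 2 n + 1) / ((n : ℝ) + 1) := by
  have hfloor : ⌊Real.logb 2 n⌋ = Nat.log 2 n := by
    have := Real.floor_logb_natCast (b := 2) (Nat.cast_nonneg (α := ℝ) n)
    push_cast at this
    rw [this, Int.log_natCast]
  rw [kappa2, hfloor, zpow_natCast]
  push_cast
  field_simp
  ring

section

variable {ι : Type*} [Fintype ι]

noncomputable def kraftSum (x : ι → ℝ) (d : ι → ℕ) : ℝ :=
  ∑ j, if x j = 0 then 0 else (2⁻¹ : ℝ) ^ d j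

def expectedCodeLengths (x : ι → ℝ) : Set ℝ :=
  (fun d : ι → ℕ => ∑ j, x j * d j) '' {d | kraftSum x d ≤ 1}

noncomputable def optimalCodeLength (x : ι → ℝ) : ℝ :=
  sInf (expectedCodeLengths x)

lemma kraftSum_const_card_le_one (x : ι → ℝ) :
    kraftSum x (fun _ => Fintype.card ι) ≤ 1 := by
  calc kraftSum x (fun _ => Fintype.card ι)
      ≤ ∑ _j : ι, (2⁻¹ : ℝ) ^ Fintype.card ι :=
        sum_le_sum fun j _ => by split_ifs; exacts [by positivity, le_rfl]
    _ = Fintype.card ι / 2 ^ Fintype.card ι := by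
        rw [sum_const, card_univ, nsmul_eq_mul, inv_pow, div_eq_mul_inv]
    _ ≤ 1 := div_le_one_of_le₀ (by exact_mod_cast Nat.lt_two_pow_self.le) (by positivity)

lemma expectedCodeLengths_nonempty (x : ι → ℝ) : (expectedCodeLengths x).Nonempty :=
  ⟨_, _, kraftSum_const_card_le_one x, rfl⟩

lemma optimalCodeLength_le {x : ι → ℝ} (hx : ∀ j, 0 ≤ x j) {d : ι → ℕ}
    (hd : kraftSum x d ≤ 1) :
    optimalCodeLength x ≤ ∑ j, x j * d j :=
  csInf_le ⟨0, by
    rintro _ ⟨d, -, rfl⟩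
    exact sum_nonneg fun j _ => mul_nonneg (hx j) (Nat.cast_nonneg _)⟩ ⟨d, hd, rfl⟩

lemma le_optimalCodeLength {x : ι → ℝ} {c : ℝ}
    (h : ∀ d, kraftSum x d ≤ 1 → c ≤ ∑ j, x j * d j) :
    c ≤ optimalCodeLength x :=
  le_csInf (expectedCodeLengths_nonempty x) <| by rintro _ ⟨d, hd, rfl⟩; exact h d hd

lemma exists_sum_lt_optimalCodeLength_add (x : ι → ℝ) {ε : ℝ} (hε : 0 < ε) :
    ∃ d, kraftSum x d ≤ 1 ∧ ∑ j, x j * d j < optimalCodeLength x + ε := by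
  obtain ⟨_, ⟨d, hd, rfl⟩, hlt⟩ := Real.lt_sInf_add_pos (expectedCodeLengths_nonempty x) hε
  exact ⟨d, hd, hlt⟩

lemma optimalCodeLength_vertex_le_zero [DecidableEq ι] (i : ι) :
    optimalCodeLength (fun j => if i = j then (1 : ℝ) else 0) ≤ 0 := by
  have hx : ∀ j, (0 : ℝ) ≤ if i = j then 1 else 0 := fun j => by split_ifs <;> norm_num
  refine (optimalCodeLength_le hx (d := 0) ?_).trans_eq (by simp)
  simp [kraftSum]

lemma optimalCodeLength_convex_add_one {x y : ι → ℝ} (hx : x ∈ stdSimplex ℝ ι)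
    (hy : y ∈ stdSimplex ℝ ι) {t : ℝ} (ht₀ : 0 ≤ t) (ht₁ : t ≤ 1) :
    optimalCodeLength (t • x + (1 - t) • y) ≤
      t * optimalCodeLength x + (1 - t) * optimalCodeLength y + 1 := by
  refine le_of_forall_pos_le_add fun ε hε => ?_
  obtain ⟨d₁, hd₁, hlen₁⟩ := exists_sum_lt_optimalCodeLength_add x hε
  obtain ⟨d₂, hd₂, hlen₂⟩ := exists_sum_lt_optimalCodeLength_add y hε
  choose D hkraft hlen using fun j =>
    exists_codeword_length_mix (hx.1 j) (hy.1 j) ht₀ ht₁ (d₁ j) (d₂ j)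
  have hw : ∀ j, 0 ≤ t * x j + (1 - t) * y j := fun j =>
    add_nonneg (mul_nonneg ht₀ (hx.1 j)) (mul_nonneg (by linarith) (hy.1 j))
  have hD : kraftSum (t • x + (1 - t) • y) D ≤ 1 := calc
    kraftSum (t • x + (1 - t) • y) D ≤ (kraftSum x d₁ + kraftSum y d₂) / 2 := by
      rw [kraftSum, kraftSum, kraftSum, ← sum_add_distrib, sum_div]
      exact sum_le_sum fun j _ => hkraft j
    _ ≤ 1 := by linarith
  calc optimalCodeLength (t • x + (1 - t) • y)
      ≤ ∑ j, (t * x j + (1 - t) * y j) * D j := optimalCodeLength_le hw hD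
    _ ≤ ∑ j, (t * x j + (1 - t) * y j + (t * (x j * d₁ j) + (1 - t) * (y j * d₂ j))) :=
      sum_le_sum fun j _ => hlen j
    _ = t * ∑ j, x j + (1 - t) * ∑ j, y j +
          (t * ∑ j, x j * d₁ j + (1 - t) * ∑ j, y j * d₂ j) := by
      simp only [sum_add_distrib, mul_sum]
    _ ≤ t * (optimalCodeLength x + ε) + (1 - t) * (optimalCodeLength y + ε) + 1 := by
      rw [hx.2, hy.2]
      linarith [mul_le_mul_of_nonneg_left hlen₁.le ht₀,
        mul_le_mul_of_nonneg_left hlen₂.le (sub_nonneg.2 ht₁)]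
    _ = _ := by ring

lemma card_mul_sub_le_sum_of_kraft {d : ι → ℕ} (hd : ∑ j, (2⁻¹ : ℝ) ^ d j ≤ 1)
    (M : ℕ) :
    Fintype.card ι * ((M : ℝ) + 2) - 2 ^ (M + 1) ≤ ∑ j, (d j : ℝ) := by
  have hsum :=
    sum_le_sum fun j (_ : j ∈ univ) => add_two_le_add_two_pow_mul_inv_two_pow M (d j)
  rw [sum_const, card_univ, nsmul_eq_mul, sum_add_distrib, ← mul_sum] at hsum
  linarith [mul_le_mul_of_nonneg_left hd (by positivity : (0 : ℝ) ≤ 2 ^ (M + 1))]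

lemma le_optimalCodeLength_barycenter [Nonempty ι] (M : ℕ) :
    M + 2 - 2 ^ (M + 1) / Fintype.card ι ≤
      optimalCodeLength (stdSimplex.barycenter : stdSimplex ℝ ι).1 := by
  have hN : (0 : ℝ) < Fintype.card ι := by exact_mod_cast Fintype.card_pos
  refine le_optimalCodeLength fun d hd => ?_
  have hd' : ∑ j, (2⁻¹ : ℝ) ^ d j ≤ 1 := by simpa [kraftSum, hN.ne'] using hd
  simp only [stdSimplex.barycenter_apply, inv_mul_eq_div]
  rw [← sum_div, le_div_iff₀ hN, sub_mul, div_mul_cancel₀ _ hN.ne']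
  linarith [card_mul_sub_le_sum_of_kraft hd' M]

lemma ConvexOn.le_of_forall_vertex_le [DecidableEq ι] {g : (ι → ℝ) → ℝ}
    (hg : ConvexOn ℝ (stdSimplex ℝ ι) g) {c : ℝ}
    (h : ∀ i, g (fun j => if i = j then 1 else 0) ≤ c) {x : ι → ℝ}
    (hx : x ∈ stdSimplex ℝ ι) :
    g x ≤ c := by
  rw [← convexHull_basis_eq_stdSimplex] at hx
  obtain ⟨_, ⟨i, rfl⟩, hle⟩ := hg.exists_ge_of_mem_convexHull
    (by rintro _ ⟨i, rfl⟩; exact ite_eq_mem_stdSimplex ℝ i) hx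
  exact hle.trans (h i)

end

theorem stmt18_general (n : ℕ) :
    ∃ f : (Fin (n + 1) → ℝ) → ℝ,
      (∀ x ∈ stdSimplex ℝ (Fin (n + 1)), ∀ y ∈ stdSimplex ℝ (Fin (n + 1)),
        ∀ t : ℝ, 0 ≤ t → t ≤ 1 →
          f (t • x + (1 - t) • y) ≤ t * f x + (1 - t) * f y + 1) ∧
      ∀ g : (Fin (n + 1) → ℝ) → ℝ,
        ConvexOn ℝ (stdSimplex ℝ (Fin (n + 1))) g →
        (∀ x ∈ stdSimplex ℝ (Fin (n + 1)), g x ≤ f x) →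
        ∀ c : ℝ, (∀ x ∈ stdSimplex ℝ (Fin (n + 1)), f x - g x ≤ c) →
          kappa2 n ≤ c := by
  refine ⟨optimalCodeLength, fun x hx y hy t ↦ optimalCodeLength_convex_add_one hx hy, ?_⟩
  intro g hg hgf c hc
  have hu : (stdSimplex.barycenter : stdSimplex ℝ (Fin (n + 1))).1 ∈ stdSimplex ℝ _ :=
    Subtype.prop _
  have hgu : g _ ≤ 0 := hg.le_of_forall_vertex_le (fun i =>
    (hgf _ (ite_eq_mem_stdSimplex ℝ i)).trans (optimalCodeLength_vertex_le_zero i)) hu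
  have hfu := le_optimalCodeLength_barycenter (ι := Fin (n + 1)) (Nat.log 2 n)
  rw [Fintype.card_fin, Nat.cast_add_one] at hfu
  rw [kappa2_eq]
  linarith [hc _ hu]

theorem stmt18 (n : ℕ) (hn : 1 ≤ n) :
    ∃ f : (Fin (n + 1) → ℝ) → ℝ,
      (∀ x ∈ stdSimplex ℝ (Fin (n + 1)), ∀ y ∈ stdSimplex ℝ (Fin (n + 1)),
        ∀ t : ℝ, 0 ≤ t → t ≤ 1 →
          f (t • x + (1 - t) • y) ≤ t * f x + (1 - t) * f y + 1) ∧
      ∀ g : (Fin (n + 1) → ℝ) → ℝ,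
        ConvexOn ℝ (stdSimplex ℝ (Fin (n + 1))) g →
        (∀ x ∈ stdSimplex ℝ (Fin (n + 1)), g x ≤ f x) →
        ∀ c : ℝ, (∀ x ∈ stdSimplex ℝ (Fin (n + 1)), f x - g x ≤ c) →
          kappa2 n ≤ c :=
  stmt18_general n
end
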